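/- arXiv:2305.02450 — 3 statements merged into one kernel-verified Lean document; each statement's English description precedes it below -/
import Mathlib

section
/- Let (Ω, 𝒜, P) be a probability space, (Xₙ)_{n≥1} a sequence of nonnegative real-valued random variables, and ℱ ⊆ 𝒜 a sub-σ-field. Suppose there is an ℱ-measurable random variable M such that E[Xₙ | ℱ] ≤ M almost surely for all n ≥ 1. Let N be a random variable with values in ℕ (positive integers) such that for all n, E[Xₙ · 1_{N ≥ n} | ℱ] = E[Xₙ | ℱ] · E[1_{N ≥ n} | ℱ] almost surely. Then E[∑_{n=1}^{N} Xₙ | ℱ] ≤ M · E[N | ℱ] almost surely. -/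
open MeasureTheory ProbabilityTheory Filter Topology

/-!
Truncate the random sum: `Sₖ = ∑_{n ≤ k} Xₙ 1_{N ≥ n}`. By linearity and the factorization
hypothesis, `E[Sₖ | ℱ] = ∑_{n ≤ k} E[Xₙ | ℱ] E[1_{N ≥ n} | ℱ] ≤ M E[min k N | ℱ] ≤ M E[N | ℱ]`.
Since `0 ≤ Sₖ ≤ ∑_{n ≤ N} Xₙ` and `Sₖ` is eventually equal to `∑_{n ≤ N} Xₙ`, the conditional
dominated convergence theorem carries the bound to the limit.
-/

theorem Finset.sum_Icc_ite_le {M : Type*} [AddCommMonoid M] (f : ℕ → M) (k m : ℕ) :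
    ∑ n ∈ Finset.Icc 1 k, (if n ≤ m then f n else 0) = ∑ n ∈ Finset.Icc 1 (min k m), f n := by
  rw [← Finset.sum_filter]
  congr 1
  ext n
  simp only [Finset.mem_filter, Finset.mem_Icc]
  omega

section Truncation

variable {Ω : Type*} (N : Ω → ℕ)

theorem sum_Icc_mul_indicator_le_eq_sum_Icc_min (X : ℕ → Ω → ℝ) (k : ℕ) (ω : Ω) :
    ∑ n ∈ Finset.Icc 1 k, X n ω * {ω' | n ≤ N ω'}.indicator (fun _ => (1 : ℝ)) ω
      = ∑ n ∈ Finset.Icc 1 (min k (N ω)), X n ω := by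
  simp only [Set.indicator_apply, Set.mem_ofPred_eq, mul_ite, mul_one, mul_zero,
    Finset.sum_Icc_ite_le]

theorem sum_Icc_indicator_le_eq_min (k : ℕ) (ω : Ω) :
    ∑ n ∈ Finset.Icc 1 k, {ω' | n ≤ N ω'}.indicator (fun _ => (1 : ℝ)) ω = (min k (N ω) : ℕ) := by
  simpa using sum_Icc_mul_indicator_le_eq_sum_Icc_min N (fun _ _ => (1 : ℝ)) k ω

theorem norm_sum_Icc_mul_indicator_le {X : ℕ → Ω → ℝ} (hX : ∀ n ω, 0 ≤ X n ω) (k : ℕ) (ω : Ω) :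
    ‖∑ n ∈ Finset.Icc 1 k, X n ω * {ω' | n ≤ N ω'}.indicator (fun _ => (1 : ℝ)) ω‖
      ≤ ∑ n ∈ Finset.Icc 1 (N ω), X n ω := by
  rw [sum_Icc_mul_indicator_le_eq_sum_Icc_min, Real.norm_of_nonneg (Finset.sum_nonneg
    fun n _ => hX n ω)]
  exact Finset.sum_le_sum_of_subset_of_nonneg (Finset.Icc_subset_Icc_right (min_le_right _ _))
    fun n _ _ => hX n ω

theorem tendsto_sum_Icc_mul_indicator_le (X : ℕ → Ω → ℝ) (ω : Ω) :
    Tendsto (fun k => ∑ n ∈ Finset.Icc 1 k, X n ω * {ω' | n ≤ N ω'}.indicator (fun _ => (1 : ℝ)) ω)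
      atTop (𝓝 (∑ n ∈ Finset.Icc 1 (N ω), X n ω)) := by
  refine tendsto_atTop_of_eventually_const (i₀ := N ω) fun k hk => ?_
  rw [sum_Icc_mul_indicator_le_eq_sum_Icc_min, min_eq_right hk]

end Truncation

section CondExp

variable {Ω : Type*} {m m0 : MeasurableSpace Ω} {μ : Measure Ω}

theorem aestronglyMeasurable_indicator_le_nat {N : Ω → ℕ}
    (hN : AEMeasurable (fun ω => (N ω : ℝ)) μ) (n : ℕ) :
    AEStronglyMeasurable ({ω | n ≤ N ω}.indicator (fun _ => (1 : ℝ))) μ := by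
  have h : {ω | n ≤ N ω}.indicator (fun _ => (1 : ℝ))
      = (Set.Ici (n : ℝ)).indicator (fun _ => 1) ∘ fun ω => (N ω : ℝ) := by
    ext ω
    simp [Set.indicator_apply]
  rw [h]
  exact ((measurable_const.indicator measurableSet_Ici).comp_aemeasurable hN).aestronglyMeasurable

theorem norm_indicator_one_le_one (s : Set Ω) (ω : Ω) : ‖s.indicator (fun _ => (1 : ℝ)) ω‖ ≤ 1 := by
  simpa using norm_indicator_le_norm_self (fun _ => (1 : ℝ)) ω

theorem condExp_le_of_tendsto_of_dominated (hm : m ≤ m0) [SigmaFinite (μ.trim hm)]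
    {fs : ℕ → Ω → ℝ} {f g h : Ω → ℝ} (hfs : ∀ k, AEStronglyMeasurable (fs k) μ)
    (hg : Integrable g μ) (hfs_le : ∀ k, ∀ᵐ ω ∂μ, ‖fs k ω‖ ≤ g ω)
    (hlim : ∀ᵐ ω ∂μ, Tendsto (fun k => fs k ω) atTop (𝓝 (f ω)))
    (hle : ∀ k, μ[fs k|m] ≤ᵐ[μ] h) :
    μ[f|m] ≤ᵐ[μ] h := by
  have hL1 := tendsto_condExpL1_of_dominated_convergence hm g hfs hg hfs_le hlim
  obtain ⟨ns, -, hns⟩ := (tendstoInMeasure_of_tendsto_Lp hL1).exists_seq_tendsto_ae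
  filter_upwards [hns, condExp_ae_eq_condExpL1 hm f,
    ae_all_iff.2 fun k => condExp_ae_eq_condExpL1 hm (fs k), ae_all_iff.2 hle]
    with ω hns_ω hf_ω hfs_ω hle_ω
  rw [hf_ω]
  exact le_of_tendsto hns_ω (Eventually.of_forall fun i => hfs_ω (ns i) ▸ hle_ω (ns i))

theorem condExp_sum_mul_le_mul_condExp_sum {ι : Type*} {s : Finset ι} {X Y : ι → Ω → ℝ}
    {M : Ω → ℝ} (hXY : ∀ i ∈ s, Integrable (fun ω => X i ω * Y i ω) μ)
    (hY : ∀ i ∈ s, Integrable (Y i) μ) (hY_nonneg : ∀ i ∈ s, 0 ≤ᵐ[μ] Y i)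
    (hbound : ∀ i ∈ s, μ[X i|m] ≤ᵐ[μ] M)
    (hfac : ∀ i ∈ s, μ[fun ω => X i ω * Y i ω|m] =ᵐ[μ] fun ω => μ[X i|m] ω * μ[Y i|m] ω) :
    μ[fun ω => ∑ i ∈ s, X i ω * Y i ω|m]
      ≤ᵐ[μ] fun ω => M ω * μ[fun ω => ∑ i ∈ s, Y i ω|m] ω := by
  have hXY_sum := condExp_finsetSum hXY m
  have hY_sum := condExp_finsetSum hY m
  simp only [← Finset.sum_fn] at hXY_sum hY_sum ⊢
  have hterm : ∀ᵐ ω ∂μ, ∀ i ∈ s, μ[fun ω => X i ω * Y i ω|m] ω ≤ M ω * μ[Y i|m] ω := by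
    refine (Finset.eventually_all s).2 fun i hi => ?_
    filter_upwards [hfac i hi, hbound i hi, condExp_nonneg (m := m) (hY_nonneg i hi)]
      with ω hfac_ω hbound_ω hY_ω
    exact hfac_ω ▸ mul_le_mul_of_nonneg_right hbound_ω hY_ω
  filter_upwards [hXY_sum, hY_sum, hterm] with ω hXY_ω hY_ω hterm_ω
  rw [hXY_ω, hY_ω, Finset.sum_apply, Finset.sum_apply, Finset.mul_sum]
  exact Finset.sum_le_sum hterm_ω

end CondExp

theorem conditional_wald_general
    {Ω : Type*} {m0 : MeasurableSpace Ω} (P : Measure Ω) [IsProbabilityMeasure P]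
    (F : MeasurableSpace Ω) (hF : F ≤ m0)
    (X : ℕ → Ω → ℝ) (hXnn : ∀ n ω, 0 ≤ X n ω) (hXint : ∀ n, Integrable (X n) P)
    (M : Ω → ℝ)
    (hbound : ∀ n, P[X n|F] ≤ᵐ[P] M)
    (N : Ω → ℕ)
    (hNint : Integrable (fun ω => (N ω : ℝ)) P)
    (hSumInt : Integrable (fun ω => ∑ n ∈ Finset.Icc 1 (N ω), X n ω) P)
    (hfac : ∀ n : ℕ,
      P[fun ω => X n ω * ({ω' | n ≤ N ω'}.indicator (fun _ => (1 : ℝ))) ω|F]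
        =ᵐ[P] fun ω =>
          (P[X n|F]) ω * (P[{ω' | n ≤ N ω'}.indicator (fun _ => (1 : ℝ))|F]) ω) :
    P[fun ω => ∑ n ∈ Finset.Icc 1 (N ω), X n ω|F]
      ≤ᵐ[P] fun ω => M ω * (P[fun ω' => (N ω' : ℝ)|F]) ω := by
  set I : ℕ → Ω → ℝ := fun n => {ω | n ≤ N ω}.indicator (fun _ => (1 : ℝ))
  have hI_meas : ∀ n, AEStronglyMeasurable[m0] (I n) P :=
    aestronglyMeasurable_indicator_le_nat hNint.aemeasurable
  have hI_le : ∀ n, ∀ᵐ ω ∂P, ‖I n ω‖ ≤ 1 := fun n => ae_of_all _ (norm_indicator_one_le_one _)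
  have hI_int : ∀ n, Integrable (I n) P := fun n => .of_bound (hI_meas n) 1 (hI_le n)
  have hXI_int : ∀ n, Integrable (fun ω => X n ω * I n ω) P := fun n =>
    (hXint n).mul_bdd (hI_meas n) (hI_le n)
  have hM_nonneg : 0 ≤ᵐ[P] M := (condExp_nonneg (ae_of_all _ (hXnn 1))).trans (hbound 1)
  refine condExp_le_of_tendsto_of_dominated hF
    (fun k => (integrable_finsetSum _ fun n _ => hXI_int n).1) hSumInt
    (fun k => ae_of_all _ (norm_sum_Icc_mul_indicator_le N hXnn k))
    (ae_of_all _ (tendsto_sum_Icc_mul_indicator_le N X)) fun k => ?_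
  have hmin_le_N : P[fun ω => ∑ n ∈ Finset.Icc 1 k, I n ω|F] ≤ᵐ[P] P[fun ω => (N ω : ℝ)|F] :=
    condExp_mono (integrable_finsetSum _ fun n _ => hI_int n) hNint <| ae_of_all _ fun ω => by
      simp only [I, sum_Icc_indicator_le_eq_min]
      exact_mod_cast min_le_right _ _
  filter_upwards [condExp_sum_mul_le_mul_condExp_sum (fun n _ => hXI_int n) (fun n _ => hI_int n)
      (fun n _ => ae_of_all _ (Set.indicator_nonneg fun _ _ => zero_le_one))
      (fun n _ => hbound n) (fun n _ => hfac n), hmin_le_N, hM_nonneg] with ω hsum hmin hM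
  exact hsum.trans (mul_le_mul_of_nonneg_left hmin hM)

/-- Conditional version of Wald's identity. -/
theorem conditional_wald
    {Ω : Type*} {m0 : MeasurableSpace Ω} (P : Measure Ω) [IsProbabilityMeasure P]
    (F : MeasurableSpace Ω) (hF : F ≤ m0)
    (X : ℕ → Ω → ℝ) (hXnn : ∀ n ω, 0 ≤ X n ω) (hXint : ∀ n, Integrable (X n) P)
    (M : Ω → ℝ) (hM : StronglyMeasurable[F] M)
    (hbound : ∀ n, P[X n|F] ≤ᵐ[P] M)
    (N : Ω → ℕ) (hNpos : ∀ ω, 1 ≤ N ω)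
    (hNint : Integrable (fun ω => (N ω : ℝ)) P)
    (hSumInt : Integrable (fun ω => ∑ n ∈ Finset.Icc 1 (N ω), X n ω) P)
    (hfac : ∀ n : ℕ,
      P[fun ω => X n ω * ({ω' | n ≤ N ω'}.indicator (fun _ => (1 : ℝ))) ω|F]
        =ᵐ[P] fun ω =>
          (P[X n|F]) ω * (P[{ω' | n ≤ N ω'}.indicator (fun _ => (1 : ℝ))|F]) ω) :
    P[fun ω => ∑ n ∈ Finset.Icc 1 (N ω), X n ω|F]
      ≤ᵐ[P] fun ω => M ω * (P[fun ω' => (N ω' : ℝ)|F]) ω :=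
  conditional_wald_general P F hF X hXnn hXint M hbound N hNint hSumInt hfac
end

section
/- Let (X_t)_{t≥0} be an integrable real-valued stochastic process adapted to a filtration (ℱ_t)_{t≥0} indexed by the nonnegative integers, and let T = inf{t ≥ 0 : X_t ≤ 0}. Suppose (a) X_t · 1_{T ≥ t} ≥ 0 almost surely for all t, and (b) there is ε > 0 such that E[(X_t − X_{t+1}) · 1_{T > t} | ℱ_t] ≥ ε · 1_{T > t} almost surely for all t. Then E[T] ≤ E[X_0] / ε. -/
open MeasureTheory ProbabilityTheory
open scoped ENNReal

/-- Additive drift theorem: expectation bound on the hitting time of the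
nonpositive half-line. -/
theorem additive_drift_expectation
    {Ω : Type*} {m0 : MeasurableSpace Ω} (P : Measure Ω) [IsProbabilityMeasure P]
    (ℱ : Filtration ℕ m0)
    (X : ℕ → Ω → ℝ) (hadapted : ∀ t, StronglyMeasurable[ℱ t] (X t))
    (hint : ∀ t, Integrable (X t) P)
    (T : Ω → ℝ≥0∞)
    (hT : ∀ ω, T ω = ⨅ (t : ℕ) (_ : X t ω ≤ 0), (t : ℝ≥0∞))
    (ha : ∀ t : ℕ, ∀ᵐ ω ∂P, (t : ℝ≥0∞) ≤ T ω → 0 ≤ X t ω)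
    (ε : ℝ) (hε : 0 < ε)
    (hb : ∀ t : ℕ, ∀ᵐ ω ∂P,
      ε * ({ω' | (t : ℝ≥0∞) < T ω'}.indicator (fun _ => (1 : ℝ))) ω ≤
        (P[fun ω' => (X t ω' - X (t + 1) ω') *
            ({ω'' | (t : ℝ≥0∞) < T ω''}.indicator (fun _ => (1 : ℝ))) ω'|ℱ t]) ω) :
    ∫⁻ ω, T ω ∂P ≤ ENNReal.ofReal ((∫ ω, X 0 ω ∂P) / ε) := by
  classical
  set S : ℕ → Set Ω := fun t => {ω | (t : ℝ≥0∞) < T ω} with hS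
  set S' : ℕ → Set Ω := fun t => {ω | (t : ℝ≥0∞) ≤ T ω} with hS'
  have hXm : ∀ t, Measurable (X t) := fun t => ((hadapted t).mono (ℱ.le t)).measurable
  -- characterization of membership in S t
  have hlt : ∀ (t : ℕ) (ω : Ω), ω ∈ S t ↔ ∀ s ≤ t, 0 < X s ω := by
    intro t ω
    simp only [hS, Set.mem_setOf_eq, hT]
    constructor
    · intro h s hs
      by_contra hx
      push_neg at hx
      have h1 : (⨅ (u : ℕ) (_ : X u ω ≤ 0), (u : ℝ≥0∞)) ≤ (s : ℝ≥0∞) :=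
        iInf_le_of_le s (iInf_le_of_le hx le_rfl)
      have h2 : (t : ℝ≥0∞) < (s : ℝ≥0∞) := lt_of_lt_of_le h h1
      exact absurd (Nat.cast_le.mpr hs) (not_le.mpr h2)
    · intro h
      have h1 : (t : ℝ≥0∞) + 1 ≤ ⨅ (u : ℕ) (_ : X u ω ≤ 0), (u : ℝ≥0∞) := by
        refine le_iInf fun u => le_iInf fun hu => ?_
        have htu : t < u := by
          by_contra hle
          exact absurd hu (not_le.mpr (h u (not_lt.mp hle)))
        have h2 : ((t + 1 : ℕ) : ℝ≥0∞) ≤ (u : ℝ≥0∞) := Nat.cast_le.mpr htu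
        simpa using h2
      exact lt_of_lt_of_le (ENNReal.lt_add_right (by simp) one_ne_zero) h1
  -- characterization of membership in S' t
  have hle : ∀ (t : ℕ) (ω : Ω), ω ∈ S' t ↔ ∀ s < t, 0 < X s ω := by
    intro t ω
    simp only [hS', Set.mem_setOf_eq, hT]
    constructor
    · intro h s hs
      by_contra hx
      push_neg at hx
      have h1 : (⨅ (u : ℕ) (_ : X u ω ≤ 0), (u : ℝ≥0∞)) ≤ (s : ℝ≥0∞) :=
        iInf_le_of_le s (iInf_le_of_le hx le_rfl)
      have h2 : (t : ℝ≥0∞) ≤ (s : ℝ≥0∞) := le_trans h h1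
      exact absurd (Nat.cast_lt.mpr hs) (not_lt.mpr h2)
    · intro h
      refine le_iInf fun u => le_iInf fun hu => Nat.cast_le.mpr ?_
      by_contra hle2
      push_neg at hle2
      exact absurd hu (not_le.mpr (h u hle2))
  have hSS' : ∀ t, S' (t + 1) = S t := by
    intro t
    ext ω
    rw [hle, hlt]
    constructor
    · exact fun h s hs => h s (Nat.lt_succ_of_le hs)
    · exact fun h s hs => h s (Nat.lt_succ_iff.mp hs)
  have hsub : ∀ t, S t ⊆ S' t := by
    intro t ω hω
    rw [hle]
    rw [hlt] at hω
    exact fun s hs => hω s hs.le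
  have hSm : ∀ t, MeasurableSet (S t) := by
    intro t
    have h1 : S t = ⋂ s ∈ Finset.range (t + 1), {ω | 0 < X s ω} := by
      ext ω
      simp [hlt, Nat.lt_succ_iff]
    rw [h1]
    exact MeasurableSet.biInter (Finset.range (t + 1)).countable_toSet
      (fun s _ => measurableSet_lt measurable_const (hXm s))
  have hS'm : ∀ t, MeasurableSet (S' t) := by
    intro t
    have h1 : S' t = ⋂ s ∈ Finset.range t, {ω | 0 < X s ω} := by
      ext ω
      simp [hle]
    rw [h1]
    exact MeasurableSet.biInter (Finset.range t).countable_toSet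
      (fun s _ => measurableSet_lt measurable_const (hXm s))
  -- the integrand of the conditional expectation, rewritten as an indicator
  have hfun : ∀ t : ℕ, (fun ω' => (X t ω' - X (t + 1) ω') *
      ({ω'' | (t : ℝ≥0∞) < T ω''}.indicator (fun _ => (1 : ℝ))) ω') =
      (S t).indicator (fun ω => X t ω - X (t + 1) ω) := by
    intro t
    funext ω
    by_cases hω : ω ∈ S t
    · simp only [Set.indicator_of_mem (show ω ∈ {ω'' | (t : ℝ≥0∞) < T ω''} from hω), Set.indicator_of_mem hω, mul_one]
    · simp only [Set.indicator_of_notMem (show ω ∉ {ω'' | (t : ℝ≥0∞) < T ω''} from hω), Set.indicator_of_notMem hω, mul_zero]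
  set g : ℕ → ℝ := fun t => ∫ ω, (S' t).indicator (X t) ω ∂P with hg
  -- key per-step inequality
  have key : ∀ t : ℕ, ε * (P (S t)).toReal ≤ g t - g (t + 1) := by
    intro t
    have hdint : Integrable ((S t).indicator (fun ω => X t ω - X (t + 1) ω)) P :=
      ((hint t).sub (hint (t + 1))).indicator (hSm t)
    have hLint : Integrable (fun ω => ε * (S t).indicator (fun _ => (1 : ℝ)) ω) P :=
      (((integrable_const (1 : ℝ)).indicator (hSm t))).const_mul ε
    have h1 : ∫ ω, ε * (S t).indicator (fun _ => (1 : ℝ)) ω ∂P ≤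
        ∫ ω, (P[fun ω' => (X t ω' - X (t + 1) ω') *
          ({ω'' | (t : ℝ≥0∞) < T ω''}.indicator (fun _ => (1 : ℝ))) ω'|ℱ t]) ω ∂P :=
      integral_mono_ae hLint integrable_condExp (hb t)
    have h2 : ∫ ω, (P[fun ω' => (X t ω' - X (t + 1) ω') *
          ({ω'' | (t : ℝ≥0∞) < T ω''}.indicator (fun _ => (1 : ℝ))) ω'|ℱ t]) ω ∂P =
        ∫ ω, (S t).indicator (fun ω' => X t ω' - X (t + 1) ω') ω ∂P := by
      rw [hfun t]
      exact integral_condExp (ℱ.le t)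
    have h3 : ∫ ω, (S t).indicator (fun ω' => X t ω' - X (t + 1) ω') ω ∂P =
        (∫ ω, (S t).indicator (X t) ω ∂P) - ∫ ω, (S t).indicator (X (t + 1)) ω ∂P := by
      rw [← integral_sub ((hint t).indicator (hSm t)) ((hint (t + 1)).indicator (hSm t))]
      congr 1
      funext ω
      by_cases hω : ω ∈ S t <;>
        simp [Set.indicator_of_mem, Set.indicator_of_notMem, hω]
    -- ∫ over S t of X t is at most g t, using nonnegativity on S' t
    have h4 : ∫ ω, (S t).indicator (X t) ω ∂P ≤ g t := by
      refine integral_mono_ae ((hint t).indicator (hSm t)) ((hint t).indicator (hS'm t)) ?_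
      filter_upwards [ha t] with ω hω
      by_cases h1ω : ω ∈ S t
      · rw [Set.indicator_of_mem h1ω, Set.indicator_of_mem (hsub t h1ω)]
      · rw [Set.indicator_of_notMem h1ω]
        by_cases h2ω : ω ∈ S' t
        · rw [Set.indicator_of_mem h2ω]
          exact hω h2ω
        · rw [Set.indicator_of_notMem h2ω]
    have h5 : ∫ ω, ε * (S t).indicator (fun _ => (1 : ℝ)) ω ∂P = ε * (P (S t)).toReal := by
      rw [integral_const_mul, integral_indicator_const (1 : ℝ) (hSm t)]
      simp [Measure.real]
    have h6 : g (t + 1) = ∫ ω, (S t).indicator (X (t + 1)) ω ∂P := by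
      simp only [hg, hSS' t]
    have h7 := h1.trans_eq (h2.trans h3)
    rw [h5] at h7
    rw [h6]
    linarith
  -- nonnegativity of g
  have hg0 : ∀ t, 0 ≤ g t := by
    intro t
    refine integral_nonneg_of_ae ?_
    filter_upwards [ha t] with ω hω
    by_cases hωS : ω ∈ S' t
    · rw [Set.indicator_of_mem hωS]
      exact hω hωS
    · simp [Set.indicator_of_notMem hωS]
  -- g 0 equals E[X 0]
  have hg0eq : g 0 = ∫ ω, X 0 ω ∂P := by
    have huniv : S' 0 = Set.univ := by
      ext ω
      simp [hle]
    simp [hg, huniv]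
  -- partial-sum bound
  have hsum : ∀ n : ℕ, ∑ t ∈ Finset.range n, (P (S t)).toReal ≤ (∫ ω, X 0 ω ∂P) / ε := by
    intro n
    have h1 : ε * ∑ t ∈ Finset.range n, (P (S t)).toReal ≤ g 0 - g n := by
      rw [Finset.mul_sum]
      calc ∑ t ∈ Finset.range n, ε * (P (S t)).toReal
          ≤ ∑ t ∈ Finset.range n, (g t - g (t + 1)) := Finset.sum_le_sum fun t _ => key t
        _ = g 0 - g n := by rw [Finset.sum_range_sub' g n]
    have h2 := hg0 n
    rw [le_div_iff₀ hε]
    rw [hg0eq] at h1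
    linarith
  -- pass to ℝ≥0∞
  have htsum : ∑' t : ℕ, P (S t) ≤ ENNReal.ofReal ((∫ ω, X 0 ω ∂P) / ε) := by
    rw [ENNReal.tsum_eq_iSup_nat]
    refine iSup_le fun n => ?_
    have heq : ∑ t ∈ Finset.range n, P (S t) =
        ENNReal.ofReal (∑ t ∈ Finset.range n, (P (S t)).toReal) := by
      rw [ENNReal.ofReal_sum_of_nonneg fun t _ => ENNReal.toReal_nonneg]
      exact Finset.sum_congr rfl fun t _ => (ENNReal.ofReal_toReal (measure_ne_top P _)).symm
    rw [heq]
    exact ENNReal.ofReal_le_ofReal (hsum n)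
  -- T as a sum of indicators
  have hTsum : ∀ ω, T ω = ∑' n : ℕ, (S n).indicator (fun _ => (1 : ℝ≥0∞)) ω := by
    intro ω
    by_cases hall : ∀ n : ℕ, ω ∈ S n
    · have hTtop : T ω = ∞ := by
        by_contra hne
        obtain ⟨n, hn⟩ := ENNReal.exists_nat_gt hne
        exact absurd (hall n) (by simpa [hS] using not_lt.mpr hn.le)
      have hone : ∀ n : ℕ, (S n).indicator (fun _ => (1 : ℝ≥0∞)) ω = 1 := fun n =>
        Set.indicator_of_mem (hall n) _
      rw [hTtop]
      simp only [hone]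
      exact (ENNReal.tsum_const_eq_top_of_ne_zero one_ne_zero).symm
    · push_neg at hall
      have hex : ∃ n : ℕ, ω ∉ S n := hall
      set m := Nat.find hex with hm
      have hmem : ∀ n, ω ∈ S n ↔ n < m := by
        intro n
        constructor
        · intro hn
          by_contra hnm
          push_neg at hnm
          have hTm : T ω ≤ (m : ℝ≥0∞) := not_lt.mp (Nat.find_spec hex)
          have h2 : (n : ℝ≥0∞) < (m : ℝ≥0∞) := lt_of_lt_of_le hn hTm
          exact absurd (Nat.cast_le.mpr hnm) (not_le.mpr h2)
        · intro hn
          by_contra hns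
          exact Nat.find_min hex hn hns
      have hTm : T ω = (m : ℝ≥0∞) := by
        refine le_antisymm (not_lt.mp (Nat.find_spec hex)) ?_
        rw [hT]
        refine le_iInf fun u => le_iInf fun hu => Nat.cast_le.mpr ?_
        by_contra hum
        push_neg at hum
        have := (hlt u ω).mp ((hmem u).mpr hum) u le_rfl
        exact absurd hu (not_le.mpr this)
      have hsupp : ∀ n ∉ Finset.range m, (S n).indicator (fun _ => (1 : ℝ≥0∞)) ω = 0 := by
        intro n hn
        rw [Finset.mem_range] at hn
        exact Set.indicator_of_notMem (fun h => hn ((hmem n).mp h)) _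
      rw [hTm, tsum_eq_sum hsupp]
      have hone : ∀ n ∈ Finset.range m, (S n).indicator (fun _ => (1 : ℝ≥0∞)) ω = 1 := by
        intro n hn
        exact Set.indicator_of_mem ((hmem n).mpr (Finset.mem_range.mp hn)) _
      rw [Finset.sum_congr rfl hone]
      simp
  -- conclude
  calc ∫⁻ ω, T ω ∂P = ∫⁻ ω, ∑' n : ℕ, (S n).indicator (fun _ => (1 : ℝ≥0∞)) ω ∂P :=
        lintegral_congr hTsum
    _ = ∑' n : ℕ, ∫⁻ ω, (S n).indicator (fun _ => (1 : ℝ≥0∞)) ω ∂P :=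
        lintegral_tsum fun n => ((measurable_const.indicator (hSm n))).aemeasurable
    _ = ∑' n : ℕ, P (S n) := by
        refine tsum_congr fun n => ?_
        exact lintegral_indicator_one (hSm n)
    _ ≤ ENNReal.ofReal ((∫ ω, X 0 ω ∂P) / ε) := htsum
end

section
/- Let (Ω, 𝒜, P) be a probability space, X an integrable random variable, ℱ ⊆ 𝒜 a sub-σ-field, and let Z be a {0,1}-valued random variable such that, writing h = E[Z | ℱ, X] (the conditional expectation of Z given σ(ℱ ∪ σ(X))), h is in fact ℱ-measurable with h > 0 almost surely. Then for the conditional measure P₁ = P(· | Z = 1), assuming P(Z = 1) > 0, it holds P₁-almost surely that E_{P₁}[X | ℱ] = E_P[X · h | ℱ] / E_P[h | ℱ] = E_P[X | ℱ]. -/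
open MeasureTheory ProbabilityTheory

/-- Bias cancellation for Bayes filters: if the `{0,1}`-valued acceptance
variable `Z` has conditional success probability, given `σ(ℱ ∪ σ(X))`, equal
to an `ℱ`-measurable function `h > 0`, then conditioning on `Z = 1` does not
change the conditional law of `X` given `ℱ`. -/
theorem cond_condexp_eq_of_bayes_filter
    {Ω : Type*} (F : MeasurableSpace Ω) {m0 : MeasurableSpace Ω} (P : Measure Ω) [IsProbabilityMeasure P]
    (hF : F ≤ m0)
    (X : Ω → ℝ) (hX : Integrable X P) (hXmeas : Measurable X)
    (Z : Ω → ℝ) (hZ01 : ∀ ω, Z ω = 0 ∨ Z ω = 1)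
    (h : Ω → ℝ) (hmeas : StronglyMeasurable[F] h) (hpos : ∀ᵐ ω ∂P, 0 < h ω)
    (hcond : P[Z|F ⊔ MeasurableSpace.comap X inferInstance] =ᵐ[P] h)
    (hZ1 : 0 < P {ω | Z ω = 1}) :
    ((P[|{ω | Z ω = 1}])[X|F] =ᵐ[P[|{ω | Z ω = 1}]]
        fun ω => (P[fun ω' => X ω' * h ω'|F]) ω / (P[h|F]) ω) ∧
      (P[|{ω | Z ω = 1}])[X|F] =ᵐ[P[|{ω | Z ω = 1}]] P[X|F] := by
  set G := F ⊔ MeasurableSpace.comap X inferInstance with hGdef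
  letI : MeasurableSpace Ω := m0
  have hG : G ≤ m0 := sup_le hF (measurable_iff_comap_le.mp hXmeas)
  have hXG' : Measurable[G] X := measurable_iff_comap_le.mpr le_sup_right
  have hXG : StronglyMeasurable[G] X := hXG'.stronglyMeasurable
  -- Z is integrable
  have hZint : Integrable Z P := by
    by_contra hni
    rw [condExp_of_not_integrable hni] at hcond
    obtain ⟨ω, hω1, hω2⟩ := (hpos.and hcond.symm).exists
    simp only [Pi.zero_apply] at hω2
    rw [← hω2] at hω1; exact lt_irrefl _ hω1
  have hZ0 : ∀ ω, 0 ≤ Z ω := fun ω => by rcases hZ01 ω with h' | h' <;> rw [h'] <;> norm_num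
  have hZle1 : ∀ ω, Z ω ≤ 1 := fun ω => by rcases hZ01 ω with h' | h' <;> rw [h'] <;> norm_num
  have hZbd : ∀ᵐ ω ∂P, ‖Z ω‖ ≤ 1 := Filter.Eventually.of_forall fun ω => by
    rw [Real.norm_eq_abs, abs_le]; exact ⟨by linarith [hZ0 ω], hZle1 ω⟩
  -- h is integrable and a.e. bounded by 1
  have hhint : Integrable h P := integrable_condExp.congr hcond
  have hhbd : ∀ᵐ ω ∂P, ‖h ω‖ ≤ 1 := by
    have h0 : 0 ≤ᵐ[P] P[Z|G] := condExp_nonneg (Filter.Eventually.of_forall hZ0)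
    have h1 : P[Z|G] ≤ᵐ[P] fun _ => (1 : ℝ) := by
      have h1' := condExp_mono (m := G) hZint (integrable_const (1 : ℝ))
        (Filter.Eventually.of_forall hZle1)
      refine h1'.trans_eq ?_
      rw [condExp_const hG]
    filter_upwards [h0, h1, hcond] with ω h0ω h1ω hcω
    simp only [Pi.zero_apply] at h0ω
    rw [Real.norm_eq_abs, abs_le]
    refine ⟨by rw [← hcω]; linarith [h0ω], by rw [← hcω]; exact h1ω⟩
  -- the set A and a measurable version B
  set A := {ω | Z ω = 1} with hAdef
  have hZindA : Z = A.indicator (fun _ => (1 : ℝ)) := by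
    funext ω
    rcases hZ01 ω with h' | h'
    · have hωA : ω ∉ A := by simp [hAdef, h']
      rw [h', Set.indicator_apply]; simp [hωA]
    · have hωA : ω ∈ A := h'
      rw [h', Set.indicator_apply]; simp [hωA]
  have hAnm : NullMeasurableSet A P :=
    hZint.aestronglyMeasurable.aemeasurable.nullMeasurable (measurableSet_singleton (1 : ℝ))
  set B := MeasureTheory.toMeasurable P A with hBdef
  have hB : MeasurableSet B := measurableSet_toMeasurable P A
  have hBA : B =ᵐ[P] A := hAnm.toMeasurable_ae_eq
  have hPAB : P A = P B := (measure_toMeasurable A).symm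
  have hPB : P B ≠ 0 := by rw [← hPAB]; exact hZ1.ne'
  have hcne : (P B)⁻¹ ≠ ⊤ := ENNReal.inv_ne_top.mpr hPB
  have hZindB : Z =ᵐ[P] B.indicator (fun _ => (1 : ℝ)) := by
    rw [hZindA]
    exact (indicator_ae_eq_of_ae_eq_set hBA).symm
  -- rewrite the conditional measure
  have hcondm : P[|A] = (P B)⁻¹ • P.restrict B := by
    rw [ProbabilityTheory.cond, Measure.restrict_congr_set (hBA.symm : A =ᵐ[P] B), hPAB]
  have hac : P[|A] ≪ P := cond_absolutelyContinuous
  -- integrability of products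
  have hXZint : Integrable (fun ω => X ω * Z ω) P :=
    (hX.bdd_mul (c := 1) hZint.aestronglyMeasurable hZbd).congr
      (Filter.Eventually.of_forall fun ω => mul_comm _ _)
  have hXhint : Integrable (fun ω => X ω * h ω) P :=
    (hX.bdd_mul (c := 1) hhint.aestronglyMeasurable hhbd).congr
      (Filter.Eventually.of_forall fun ω => mul_comm _ _)
  -- the conditional expectation of X given F under P
  set gX := P[X|F] with hgXdef
  have hgXF : StronglyMeasurable[F] gX := stronglyMeasurable_condExp
  have hgXint : Integrable gX P := integrable_condExp
  have hgXZint : Integrable (fun ω => gX ω * Z ω) P :=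
    (hgXint.bdd_mul (c := 1) hZint.aestronglyMeasurable hZbd).congr
      (Filter.Eventually.of_forall fun ω => mul_comm _ _)
  have hgXhint : Integrable (fun ω => gX ω * h ω) P :=
    (hgXint.bdd_mul (c := 1) hhint.aestronglyMeasurable hhbd).congr
      (Filter.Eventually.of_forall fun ω => mul_comm _ _)
  -- P[h|F] = h
  have eq_hF : P[h|F] = h := condExp_of_stronglyMeasurable hF hmeas hhint
  -- P[X*h|F] =ᵐ gX * h
  have eqXh : P[fun ω => X ω * h ω|F] =ᵐ[P] fun ω => gX ω * h ω := by
    have t : P[fun ω => h ω * X ω|F] =ᵐ[P] fun ω => h ω * gX ω := by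
      have := condExp_mul_of_stronglyMeasurable_left (μ := P) (m := F) hmeas
        (hXhint.congr (Filter.Eventually.of_forall fun ω => mul_comm _ _)) hX
      exact this
    calc P[fun ω => X ω * h ω|F]
        =ᵐ[P] P[fun ω => h ω * X ω|F] := by
          refine condExp_congr_ae (Filter.Eventually.of_forall fun ω => mul_comm _ _)
      _ =ᵐ[P] fun ω => h ω * gX ω := t
      _ =ᵐ[P] fun ω => gX ω * h ω :=
          Filter.Eventually.of_forall fun ω => mul_comm _ _
  -- P[X*Z|F] =ᵐ gX * h
  have eqXZ : P[fun ω => X ω * Z ω|F] =ᵐ[P] fun ω => gX ω * h ω := by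
    have t1 : P[fun ω => X ω * Z ω|G] =ᵐ[P] fun ω => X ω * h ω := by
      have t := condExp_mul_of_stronglyMeasurable_left (μ := P) (m := G) hXG hXZint hZint
      refine t.trans ?_
      filter_upwards [hcond] with ω hω
      simp only [Pi.mul_apply]
      rw [hω]
    calc P[fun ω => X ω * Z ω|F]
        =ᵐ[P] P[P[fun ω => X ω * Z ω|G]|F] := (condExp_condExp_of_le le_sup_left hG).symm
      _ =ᵐ[P] P[fun ω => X ω * h ω|F] := condExp_congr_ae t1
      _ =ᵐ[P] fun ω => gX ω * h ω := eqXh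
  -- P[gX*Z|F] =ᵐ gX * h
  have eqgZ : P[fun ω => gX ω * Z ω|F] =ᵐ[P] fun ω => gX ω * h ω := by
    have t1 : P[fun ω => gX ω * Z ω|G] =ᵐ[P] fun ω => gX ω * h ω := by
      have t := condExp_mul_of_stronglyMeasurable_left (μ := P) (m := G)
        (hgXF.mono le_sup_left) hgXZint hZint
      refine t.trans ?_
      filter_upwards [hcond] with ω hω
      simp only [Pi.mul_apply]
      rw [hω]
    calc P[fun ω => gX ω * Z ω|F]
        =ᵐ[P] P[P[fun ω => gX ω * Z ω|G]|F] := (condExp_condExp_of_le le_sup_left hG).symm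
      _ =ᵐ[P] P[fun ω => gX ω * h ω|F] := condExp_congr_ae t1
      _ =ᵐ[P] fun ω => gX ω * h ω :=
          Filter.EventuallyEq.of_eq
            (condExp_of_stronglyMeasurable hF (hgXF.mul hmeas) hgXhint)
  -- key set-integral identity
  have key : ∀ (f : Ω → ℝ), ∀ s : Set Ω, MeasurableSet[F] s →
      ∫ x in s ∩ B, f x ∂P = ∫ x in s, f x * Z x ∂P := by
    intro f s hs
    rw [← setIntegral_indicator hB]
    refine setIntegral_congr_ae (hF s hs) ?_
    filter_upwards [hZindB] with ω hω _
    by_cases hωB : ω ∈ B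
    · simp only [Set.indicator_of_mem hωB] at hω ⊢
      rw [hω, mul_one]
    · simp only [Set.indicator_of_notMem hωB] at hω ⊢
      rw [hω, mul_zero]
  -- both set integrals agree
  have hsetint : ∀ s : Set Ω, MeasurableSet[F] s →
      ∫ x in s, gX x ∂(P[|A]) = ∫ x in s, X x ∂(P[|A]) := by
    intro s hs
    have smul_int : ∀ f : Ω → ℝ, ∫ x in s, f x ∂((P B)⁻¹ • P.restrict B)
        = (P B)⁻¹.toReal • ∫ x in s ∩ B, f x ∂P := by
      intro f
      rw [Measure.restrict_smul, integral_smul_measure, Measure.restrict_restrict (hF s hs)]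
    rw [hcondm, smul_int, smul_int]
    congr 1
    calc ∫ x in s ∩ B, gX x ∂P
        = ∫ x in s, gX x * Z x ∂P := key gX s hs
      _ = ∫ x in s, (P[fun ω => gX ω * Z ω|F]) x ∂P := (setIntegral_condExp hF hgXZint hs).symm
      _ = ∫ x in s, gX x * h x ∂P :=
          setIntegral_congr_ae (hF s hs) (eqgZ.mono fun ω hω _ => hω)
      _ = ∫ x in s, (P[fun ω => X ω * Z ω|F]) x ∂P :=
          (setIntegral_congr_ae (hF s hs) (eqXZ.mono fun ω hω _ => hω)).symm
      _ = ∫ x in s, X x * Z x ∂P := setIntegral_condExp hF hXZint hs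
      _ = ∫ x in s ∩ B, X x ∂P := (key X s hs).symm
  -- integrability under the conditional measure
  have hXc : Integrable X (P[|A]) := by
    rw [hcondm]; exact hX.restrict.smul_measure hcne
  have hgXc : Integrable gX (P[|A]) := by
    rw [hcondm]; exact hgXint.restrict.smul_measure hcne
  haveI hfin : IsFiniteMeasure (P[|A]) := by
    rw [hcondm]
    refine ⟨?_⟩
    rw [Measure.smul_apply, smul_eq_mul]
    exact ENNReal.mul_lt_top (by simpa [ENNReal.inv_lt_top, pos_iff_ne_zero] using hPB)
      (measure_lt_top _ _)
  -- the main identification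
  have main : gX =ᵐ[P[|A]] (P[|A])[X|F] := by
    refine ae_eq_condExp_of_forall_setIntegral_eq hF hXc
      (fun s _ _ => hgXc.integrableOn) (fun s hs _ => hsetint s hs)
      hgXF.aestronglyMeasurable
  -- the quotient equals gX a.e.
  have eq4 : (fun ω => (P[fun ω' => X ω' * h ω'|F]) ω / (P[h|F]) ω) =ᵐ[P] gX := by
    rw [eq_hF]
    filter_upwards [eqXh, hpos] with ω hω hp
    rw [hω, mul_div_assoc, div_self hp.ne', mul_one]
  have eq4c : (fun ω => (P[fun ω' => X ω' * h ω'|F]) ω / (P[h|F]) ω) =ᵐ[P[|A]] gX :=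
    hac.ae_eq eq4
  exact ⟨main.symm.trans eq4c.symm, main.symm⟩
end
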